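/- Fix natural numbers ℓ, m, p, q with 2 ≤ ℓ, ℓ < m, 1 ≤ p, p < q; set n := p*(ℓ−1) + q*(m−1) + 2 and let r := (ℓ : ℝ) + m + (2 − p − q)/q. Define N(L) := Nat.card {(a,b) : ℤ × ℤ | (|a| : ℝ) ≤ L^ℓ ∧ (|b| : ℝ) ≤ L^m ∧ ((|a|^p * |b|^q : ℤ) : ℝ) ≤ L^n}. Then the function L ↦ Real.log (N(L)) / Real.log L tends to r as L → ∞ (Filter.Tendsto along Filter.atTop to the neighborhood filter of r). -/

import Mathlib

/-!
The box `|a| ≤ L^ℓ`, `|b| ≤ L^(r-ℓ)` lies inside the region and has at least `L^r` points.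
Conversely, the fibre over `a ≠ 0` has `O(L^(n/q) |a|^(-p/q))` points; as `p/q < 1`, summing
over `|a| ≤ L^ℓ` gives `O(L^(n/q + ℓ(1-p/q))) = O(L^r)`, while the fibre over `a = 0` has
`O(L^m)` points and `m ≤ r`. Hence `N(L) ≍ L^r`, and `log N(L) / log L → r`.
-/

open Real Finset Filter Topology

lemma one_sub_mul_rpow_neg_le_rpow_sub_rpow {s x : ℝ} (hs0 : 0 ≤ s) (hs1 : s < 1)
    (hx : 0 ≤ x) :
    (1 - s) * (x + 1) ^ (-s) ≤ (x + 1) ^ (1 - s) - x ^ (1 - s) := by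
  set y := x + 1
  have hy : 0 < y := by positivity
  have bernoulli : (1 + -1 / y) ^ (1 - s) ≤ 1 + (1 - s) * (-1 / y) :=
    rpow_one_add_le_one_add_mul_self (by rw [le_div_iff₀ hy]; linarith) (by linarith)
      (by linarith)
  have hxy : 1 + -1 / y = x / y := by field_simp; ring
  rw [hxy, div_rpow hx hy.le, div_le_iff₀ (by positivity)] at bernoulli
  have hys : y ^ (1 - s) / y = y ^ (-s) := by rw [← rpow_sub_one hy.ne']; ring_nf
  calc (1 - s) * y ^ (-s) = y ^ (1 - s) - (1 + (1 - s) * (-1 / y)) * y ^ (1 - s) := by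
        rw [← hys]; field_simp; ring
    _ ≤ y ^ (1 - s) - x ^ (1 - s) := by linarith

lemma sum_range_rpow_neg_le {s : ℝ} (hs0 : 0 ≤ s) (hs1 : s < 1) (U : ℕ) :
    ∑ i ∈ range U, ((i : ℝ) + 1) ^ (-s) ≤ (U : ℝ) ^ (1 - s) / (1 - s) := by
  have hs : 0 < 1 - s := by linarith
  induction U with
  | zero => simp [zero_rpow hs.ne']
  | succ U ih =>
    have step := one_sub_mul_rpow_neg_le_rpow_sub_rpow hs0 hs1 (Nat.cast_nonneg U)
    rw [sum_range_succ, Nat.cast_succ, le_div_iff₀ hs]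
    rw [le_div_iff₀ hs] at ih
    linarith

lemma le_rpow_mul_rpow_neg_of_pow_mul_pow_le {p q : ℕ} (hq : q ≠ 0) {x y Z : ℝ} (hx : 0 < x)
    (hy : 0 ≤ y) (h : x ^ p * y ^ q ≤ Z) : y ≤ Z ^ (q⁻¹ : ℝ) * x ^ (-(p / q : ℝ)) := by
  have hyq : y ^ q ≤ Z / x ^ p := by rw [le_div_iff₀ (by positivity)]; linarith
  calc y = (y ^ q) ^ (q⁻¹ : ℝ) := (pow_rpow_inv_natCast hy hq).symm
    _ ≤ (Z / x ^ p) ^ (q⁻¹ : ℝ) := by gcongr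
    _ = Z ^ (q⁻¹ : ℝ) * x ^ (-(p / q : ℝ)) := by
      rw [div_rpow (h.trans' (by positivity)) (by positivity), ← rpow_natCast x p,
        ← rpow_mul hx.le, rpow_neg hx.le, div_eq_mul_inv, div_eq_mul_inv]

lemma tendsto_log_div_log_of_le_of_le {f : ℝ → ℝ} {r c C : ℝ} (hc : 0 < c)
    (hlow : ∀ᶠ L in atTop, c * L ^ r ≤ f L) (hup : ∀ᶠ L in atTop, f L ≤ C * L ^ r) :
    Tendsto (fun L => log (f L) / log L) atTop (𝓝 r) := by
  have hlim (a : ℝ) : Tendsto (fun L => log a / log L + r) atTop (𝓝 r) := by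
    simpa using
      (tendsto_const_nhds.div_atTop tendsto_log_atTop).add (tendsto_const_nhds (x := r))
  have hlog {a L : ℝ} (ha : 0 < a) (hL : 1 < L) :
      log (a * L ^ r) = (log a / log L + r) * log L := by
    have : log L ≠ 0 := (log_pos hL).ne'
    rw [log_mul ha.ne' (by positivity), log_rpow (by positivity)]
    field_simp
  have hpos : ∀ᶠ L in atTop, 1 < L ∧ 0 < c * L ^ r ∧ c * L ^ r ≤ f L ∧ f L ≤ C * L ^ r := by
    filter_upwards [eventually_gt_atTop 1, hlow, hup] with L hL hl hu
    exact ⟨hL, mul_pos hc (rpow_pos_of_pos (by linarith) r), hl, hu⟩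
  refine tendsto_of_tendsto_of_tendsto_of_le_of_le' (hlim c) (hlim C) ?_ ?_
  · filter_upwards [hpos] with L hL
    obtain ⟨hL, hcL, hl, -⟩ := hL
    rw [le_div_iff₀ (log_pos hL), ← hlog hc hL]
    exact log_le_log hcL hl
  · filter_upwards [hpos] with L hL
    obtain ⟨hL, hcL, hl, hu⟩ := hL
    have hC : 0 < C := pos_of_mul_pos_left (hcL.trans_le (hl.trans hu)) (by positivity)
    rw [div_le_iff₀ (log_pos hL), ← hlog hC hL]
    exact log_le_log (hcL.trans_le hl) hu

noncomputable def intBall (X : ℝ) : Finset ℤ := Icc (-⌊X⌋) ⌊X⌋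

lemma mem_intBall {X : ℝ} {b : ℤ} : b ∈ intBall X ↔ (|b| : ℝ) ≤ X := by
  rw [intBall, mem_Icc, ← abs_le, ← Int.cast_abs, Int.le_floor]

lemma card_intBall {X : ℝ} (hX : 0 ≤ X) : (#(intBall X) : ℝ) = 2 * ⌊X⌋ + 1 := by
  have := Int.floor_nonneg.2 hX
  have h : ((⌊X⌋ + 1 - -⌊X⌋).toNat : ℤ) = 2 * ⌊X⌋ + 1 := by omega
  rw [intBall, Int.card_Icc]
  exact_mod_cast h

lemma le_card_intBall {X : ℝ} (hX : 0 ≤ X) : X ≤ #(intBall X) := by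
  rw [card_intBall hX]
  have := Int.lt_floor_add_one X
  have : (0 : ℝ) ≤ ⌊X⌋ := by exact_mod_cast Int.floor_nonneg.2 hX
  linarith

lemma card_intBall_le {X : ℝ} (hX : 0 ≤ X) : #(intBall X) ≤ 2 * X + 1 := by
  rw [card_intBall hX]
  linarith [Int.floor_le X]

noncomputable def hyperbolicBoxPoints (p q : ℕ) (X Y Z : ℝ) : Finset (ℤ × ℤ) :=
  {ab ∈ intBall X ×ˢ intBall Y | ((|ab.1| ^ p * |ab.2| ^ q : ℤ) : ℝ) ≤ Z}

lemma mem_hyperbolicBoxPoints {p q : ℕ} {X Y Z : ℝ} {ab : ℤ × ℤ} :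
    ab ∈ hyperbolicBoxPoints p q X Y Z ↔
      (|ab.1| : ℝ) ≤ X ∧ (|ab.2| : ℝ) ≤ Y ∧ ((|ab.1| ^ p * |ab.2| ^ q : ℤ) : ℝ) ≤ Z := by
  rw [hyperbolicBoxPoints, mem_filter, mem_product, mem_intBall, mem_intBall, and_assoc]

lemma natCard_setOf_eq_card_hyperbolicBoxPoints (p q : ℕ) (X Y Z : ℝ) :
    Nat.card {ab : ℤ × ℤ | (|ab.1| : ℝ) ≤ X ∧ (|ab.2| : ℝ) ≤ Y ∧
      ((|ab.1| ^ p * |ab.2| ^ q : ℤ) : ℝ) ≤ Z} = #(hyperbolicBoxPoints p q X Y Z) := by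
  simp_rw [← mem_hyperbolicBoxPoints, ← mem_coe, Set.ofPred_mem_eq, Nat.card_coe_set_eq,
    Set.ncard_coe_finset]

lemma mul_le_card_hyperbolicBoxPoints {p q : ℕ} {X Y Z W : ℝ} (hX : 0 ≤ X) (hW : 0 ≤ W)
    (hWY : W ≤ Y) (hZ : X ^ p * W ^ q ≤ Z) : X * W ≤ #(hyperbolicBoxPoints p q X Y Z) := by
  have hbox : intBall X ×ˢ intBall W ⊆ hyperbolicBoxPoints p q X Y Z := by
    rintro ⟨a, b⟩ hab
    rw [mem_product, mem_intBall, mem_intBall] at hab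
    refine mem_hyperbolicBoxPoints.2 ⟨hab.1, hab.2.trans hWY, ?_⟩
    push_cast
    calc (|a| : ℝ) ^ p * (|b| : ℝ) ^ q ≤ X ^ p * W ^ q := by
          gcongr
          exacts [hab.1, hab.2]
      _ ≤ Z := hZ
  calc X * W ≤ #(intBall X) * #(intBall W) :=
        mul_le_mul (le_card_intBall hX) (le_card_intBall hW) hW (Nat.cast_nonneg _)
    _ = #(intBall X ×ˢ intBall W) := by rw [card_product, Nat.cast_mul]
    _ ≤ #(hyperbolicBoxPoints p q X Y Z) := by exact_mod_cast card_le_card hbox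

lemma card_filter_natAbs_fst_le {s : Finset (ℤ × ℤ)} {u : ℕ} {B : ℝ} (hB : 0 ≤ B)
    (h : ∀ ab ∈ s, ab.1.natAbs = u → (|ab.2| : ℝ) ≤ B) :
    (#{ab ∈ s | ab.1.natAbs = u} : ℝ) ≤ 2 * (2 * B + 1) := by
  have hsub : {ab ∈ s | ab.1.natAbs = u} ⊆ {(u : ℤ), -(u : ℤ)} ×ˢ intBall B := by
    rintro ⟨a, b⟩ hab
    rw [mem_filter] at hab
    rw [mem_product, mem_insert, mem_singleton, mem_intBall]
    exact ⟨by omega, h _ hab.1 hab.2⟩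
  calc (#{ab ∈ s | ab.1.natAbs = u} : ℝ) ≤ #({(u : ℤ), -(u : ℤ)} ×ˢ intBall B) := by
        exact_mod_cast card_le_card hsub
    _ ≤ 2 * (2 * B + 1) := by
      rw [card_product, Nat.cast_mul]
      gcongr
      · exact_mod_cast card_le_two
      · exact card_intBall_le hB

theorem card_hyperbolicBoxPoints_le {p q : ℕ} (hpq : p < q) {X Y Z : ℝ} (hX : 0 ≤ X)
    (hY : 0 ≤ Y) (hZ : 0 ≤ Z) :
    (#(hyperbolicBoxPoints p q X Y Z) : ℝ) ≤
      2 * X + 4 * Y + 2 + 4 * Z ^ (q⁻¹ : ℝ) * X ^ (1 - p / q : ℝ) / (1 - p / q) := by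
  set H := hyperbolicBoxPoints p q X Y Z
  set s : ℝ := p / q
  have hq : (0 : ℝ) < q := by exact_mod_cast (Nat.zero_le p).trans_lt hpq
  have hs0 : 0 ≤ s := by positivity
  have hs1 : s < 1 := by rw [div_lt_one hq]; exact_mod_cast hpq
  have hmaps : Set.MapsTo (fun ab : ℤ × ℤ => ab.1.natAbs) H (range (⌊X⌋₊ + 1)) := by
    intro ab hab
    rw [mem_coe, mem_range, Nat.lt_succ_iff]
    refine Nat.le_floor ?_
    rw [Nat.cast_natAbs]
    exact_mod_cast (mem_hyperbolicBoxPoints.1 hab).1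
  have hzero : (#{ab ∈ H | ab.1.natAbs = 0} : ℝ) ≤ 2 * (2 * Y + 1) :=
    card_filter_natAbs_fst_le hY fun ab hab _ => (mem_hyperbolicBoxPoints.1 hab).2.1
  have hsucc (i : ℕ) : (#{ab ∈ H | ab.1.natAbs = i + 1} : ℝ) ≤
      2 * (2 * (Z ^ (q⁻¹ : ℝ) * ((i : ℝ) + 1) ^ (-s)) + 1) := by
    refine card_filter_natAbs_fst_le (by positivity) fun ab hab hi => ?_
    obtain ⟨-, -, hZab⟩ := mem_hyperbolicBoxPoints.1 hab
    have ha : |(ab.1 : ℝ)| = (i : ℝ) + 1 := by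
      rw [← Int.cast_abs, ← Nat.cast_natAbs, hi, Nat.cast_succ]
    push_cast [ha] at hZab
    exact le_rpow_mul_rpow_neg_of_pow_mul_pow_le (by omega) (by positivity) (by positivity) hZab
  calc (#H : ℝ) = ∑ i ∈ range ⌊X⌋₊, (#{ab ∈ H | ab.1.natAbs = i + 1} : ℝ) +
        #{ab ∈ H | ab.1.natAbs = 0} := by
        rw [card_eq_sum_card_fiberwise hmaps, Nat.cast_sum, sum_range_succ']
    _ ≤ ∑ i ∈ range ⌊X⌋₊, (2 + 4 * Z ^ (q⁻¹ : ℝ) * ((i : ℝ) + 1) ^ (-s)) +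
          2 * (2 * Y + 1) := by
        gcongr with i
        linarith [hsucc i]
    _ = 2 * ⌊X⌋₊ + 4 * Y + 2 +
          4 * Z ^ (q⁻¹ : ℝ) * ∑ i ∈ range ⌊X⌋₊, ((i : ℝ) + 1) ^ (-s) := by
        rw [sum_add_distrib, ← mul_sum, sum_const, card_range, nsmul_eq_mul]; ring
    _ ≤ 2 * X + 4 * Y + 2 + 4 * Z ^ (q⁻¹ : ℝ) * (X ^ (1 - s) / (1 - s)) := by
        gcongr
        · exact Nat.floor_le hX
        · refine (sum_range_rpow_neg_le hs0 hs1 _).trans ?_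
          gcongr
          exact Nat.floor_le hX
    _ = _ := by ring

lemma rpow_le_card_hyperbolicBoxPoints_pow {p q ℓ m n : ℕ} (hq : q ≠ 0)
    (hnm : (n - p * ℓ : ℝ) ≤ q * m) {L : ℝ} (hL : 1 ≤ L) :
    L ^ (ℓ + (n - p * ℓ) / q : ℝ) ≤ #(hyperbolicBoxPoints p q (L ^ ℓ) (L ^ m) (L ^ n)) := by
  have hL0 : 0 < L := by linarith
  have hq' : (q : ℝ) ≠ 0 := by exact_mod_cast hq
  set W := L ^ ((n - p * ℓ) / q : ℝ)
  have hWm : W ≤ L ^ m := by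
    rw [← rpow_natCast L m]
    exact rpow_le_rpow_of_exponent_le hL (by rw [div_le_iff₀ (by positivity)]; linarith)
  have hWq : (L ^ ℓ) ^ p * W ^ q = L ^ n := by
    rw [← rpow_natCast W, ← rpow_mul hL0.le, div_mul_cancel₀ _ hq', ← pow_mul,
      ← rpow_natCast L, ← rpow_add hL0, ← rpow_natCast L n]
    push_cast
    ring_nf
  rw [rpow_add hL0, rpow_natCast]
  exact mul_le_card_hyperbolicBoxPoints (by positivity) (by positivity) hWm hWq.le

lemma card_hyperbolicBoxPoints_pow_le {p q ℓ m n : ℕ} (hpq : p < q)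
    (hℓn : (p * ℓ : ℝ) ≤ n) (hmn : (q * (m - ℓ) : ℝ) ≤ n - p * ℓ) {L : ℝ} (hL : 1 ≤ L) :
    (#(hyperbolicBoxPoints p q (L ^ ℓ) (L ^ m) (L ^ n)) : ℝ) ≤
      (8 + 4 / (1 - p / q)) * L ^ (ℓ + (n - p * ℓ) / q : ℝ) := by
  have hL0 : 0 < L := by linarith
  have hq : (0 : ℝ) < q := by exact_mod_cast (Nat.zero_le p).trans_lt hpq
  have hs : 0 < 1 - (p / q : ℝ) := by
    rw [sub_pos, div_lt_one hq]; exact_mod_cast hpq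
  set r : ℝ := ℓ + (n - p * ℓ) / q with hr
  have hpow_le {x : ℕ} (hx : (x : ℝ) ≤ r) : L ^ x ≤ L ^ r := by
    rw [← rpow_natCast]; exact rpow_le_rpow_of_exponent_le hL hx
  have he0 : 0 ≤ (n - p * ℓ : ℝ) / q := div_nonneg (by linarith) hq.le
  have hem : (m - ℓ : ℝ) ≤ (n - p * ℓ) / q := by rw [le_div_iff₀ hq]; linarith
  have hℓr : L ^ ℓ ≤ L ^ r := hpow_le (by linarith)
  have hmr : L ^ m ≤ L ^ r := hpow_le (by linarith)
  have hr1 : 1 ≤ L ^ r := by simpa using hpow_le (x := 0) (by push_cast; linarith)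
  have hmain : (L ^ n) ^ (q⁻¹ : ℝ) * (L ^ ℓ) ^ (1 - p / q : ℝ) = L ^ r := by
    rw [← rpow_natCast L n, ← rpow_natCast L ℓ, ← rpow_mul hL0.le, ← rpow_mul hL0.le,
      ← rpow_add hL0]
    congr 1
    rw [hr]
    field_simp
    ring
  calc _ ≤ 2 * L ^ ℓ + 4 * L ^ m + 2 +
          4 * (L ^ n) ^ (q⁻¹ : ℝ) * (L ^ ℓ) ^ (1 - p / q : ℝ) / (1 - p / q) :=
        card_hyperbolicBoxPoints_le hpq (by positivity) (by positivity) (by positivity)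
    _ = 2 * L ^ ℓ + 4 * L ^ m + 2 + 4 / (1 - p / q) * L ^ r := by
        rw [mul_assoc 4, hmain]; ring
    _ ≤ (8 + 4 / (1 - p / q)) * L ^ r := by linarith

/-- With `n = p(ℓ-1) + q(m-1) + 2`, `r = ℓ + m + (2-p-q)/q`, and `N(L)` the number of
integer pairs `(a,b)` with `|a| ≤ L^ℓ`, `|b| ≤ L^m`, `|a|^p |b|^q ≤ L^n`, the function
`L ↦ log N(L) / log L` tends to `r` as `L → ∞`. -/
theorem stmt_8 (ℓ m p q : ℕ) (hℓ : 2 ≤ ℓ) (hlm : ℓ < m) (hp : 1 ≤ p) (hpq : p < q)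
    (n : ℕ) (hn : n = p * (ℓ - 1) + q * (m - 1) + 2)
    (r : ℝ) (hr : r = (ℓ : ℝ) + (m : ℝ) + (2 - (p : ℝ) - (q : ℝ)) / (q : ℝ)) :
    Filter.Tendsto (fun L : ℝ =>
        Real.log (Nat.card {ab : ℤ × ℤ | (|ab.1| : ℝ) ≤ L ^ ℓ ∧ (|ab.2| : ℝ) ≤ L ^ m ∧
          ((|ab.1| ^ p * |ab.2| ^ q : ℤ) : ℝ) ≤ L ^ n} : ℝ) / Real.log L)
      Filter.atTop (nhds r) := by
  have hq : (0 : ℝ) < q := by exact_mod_cast (Nat.zero_le p).trans_lt hpq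
  have hnR : (n : ℝ) = p * (ℓ - 1) + q * (m - 1) + 2 := by
    rw [hn]
    push_cast [Nat.cast_sub (by omega : 1 ≤ ℓ), Nat.cast_sub (by omega : 1 ≤ m)]
    ring
  have hpR : (1 : ℝ) ≤ p := by exact_mod_cast hp
  have hqR : (p : ℝ) + 1 ≤ q := by exact_mod_cast hpq
  have hℓR : (2 : ℝ) ≤ ℓ := by exact_mod_cast hℓ
  have hmR : (ℓ : ℝ) + 1 ≤ m := by exact_mod_cast hlm
  have hr' : r = ℓ + (n - p * ℓ) / q := by rw [hr, hnR]; field_simp; ring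
  simp only [natCard_setOf_eq_card_hyperbolicBoxPoints]
  rw [hr']
  refine tendsto_log_div_log_of_le_of_le (C := 8 + 4 / (1 - p / q)) one_pos ?_ ?_
  · filter_upwards [eventually_ge_atTop 1] with L hL
    rw [one_mul]
    exact rpow_le_card_hyperbolicBoxPoints_pow (by omega) (by rw [hnR]; nlinarith) hL
  · filter_upwards [eventually_ge_atTop 1] with L hL
    exact card_hyperbolicBoxPoints_pow_le hpq (by rw [hnR]; nlinarith) (by rw [hnR]; nlinarith)
      hL
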